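/- Let γ > 0, κ ≥ 0, ε be reals with ε² ≠ (γ+κ)², and let A₁ be the NOPA drift matrix as above. Let S₂₂ be a 4N×4N real matrix such that I - S₂₂ is invertible and the matrix A_N = I_N ⊗ A₁ - γ(I - S₂₂)⁻¹S₂₂ is Hurwitz (all eigenvalues have negative real part). Then the matrix I_{4N} - S₂₂(I_{4N} + γ(I_N ⊗ A₁⁻¹)) is invertible. -/

import Mathlib

open Matrix

open scoped Kronecker

/-- The NOPA drift matrix `A₁`. -/
noncomputable def A1 (γ κ ε : ℝ) : Matrix (Fin 4) (Fin 4) ℝ :=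
  !![-(γ+κ)/2, 0, ε/2, 0;
     0, -(γ+κ)/2, 0, -ε/2;
     ε/2, 0, -(γ+κ)/2, 0;
     0, -ε/2, 0, -(γ+κ)/2]

lemma A1_det (γ κ ε : ℝ) : (A1 γ κ ε).det = (((γ+κ)^2 - ε^2)/4)^2 := by
  unfold A1
  simp [Matrix.det_succ_row_zero, Fin.sum_univ_succ, Fin.succAbove_of_le_castSucc, Fin.le_def]; ring

lemma A1_det_ne (γ κ ε : ℝ) (hε : ε^2 ≠ (γ+κ)^2) : (A1 γ κ ε).det ≠ 0 := by
  rw [A1_det]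
  intro h
  apply hε
  have : (γ+κ)^2 - ε^2 = 0 := by
    have := pow_eq_zero_iff (n := 2) (two_ne_zero) |>.mp h
    field_simp at this
    linarith [this]
  linarith

/-- if the closed-loop system is well-posed and stable (Hurwitz), then
`I - S₂₂ (I_N ⊗ W₁₂)` with `W₁₂ = I₄ + γ A₁⁻¹` is invertible. -/
theorem wellposed_static_transfer (N : ℕ) (γ κ ε : ℝ)
    (hγ : 0 < γ) (hκ : 0 ≤ κ) (hε : ε^2 ≠ (γ+κ)^2)
    (S22 : Matrix (Fin N × Fin 4) (Fin N × Fin 4) ℝ)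
    (hwp : IsUnit ((1 : Matrix (Fin N × Fin 4) (Fin N × Fin 4) ℝ) - S22))
    (AN : Matrix (Fin N × Fin 4) (Fin N × Fin 4) ℝ)
    (hAN : AN = (1 : Matrix (Fin N) (Fin N) ℝ) ⊗ₖ A1 γ κ ε
              - γ • (((1 : Matrix (Fin N × Fin 4) (Fin N × Fin 4) ℝ) - S22)⁻¹ * S22))
    (hHurwitz : ∀ μ ∈ spectrum ℂ (AN.map (Complex.ofReal)), μ.re < 0) :
    IsUnit ((1 : Matrix (Fin N × Fin 4) (Fin N × Fin 4) ℝ)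
      - S22 * ((1 : Matrix (Fin N) (Fin N) ℝ) ⊗ₖ
          ((1 : Matrix (Fin 4) (Fin 4) ℝ) + γ • (A1 γ κ ε)⁻¹))) := by
  have hdet : (A1 γ κ ε).det ≠ 0 := A1_det_ne γ κ ε hε
  have hA1 : IsUnit (A1 γ κ ε) := by
    rw [Matrix.isUnit_iff_isUnit_det]; exact hdet.isUnit
  -- the Kronecker factor is a unit
  have hTdet : ((1 : Matrix (Fin N) (Fin N) ℝ) ⊗ₖ A1 γ κ ε).det ≠ 0 := by
    rw [Matrix.det_kronecker]
    simp [hdet]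
  have hT : IsUnit ((1 : Matrix (Fin N) (Fin N) ℝ) ⊗ₖ A1 γ κ ε) := by
    rw [Matrix.isUnit_iff_isUnit_det]; exact hTdet.isUnit
  -- the inverse factor
  have hTinv : IsUnit (((1 : Matrix (Fin N) (Fin N) ℝ) ⊗ₖ A1 γ κ ε)⁻¹) :=
    Matrix.isUnit_nonsing_inv_iff.mpr hT
  -- AN is a unit because it's Hurwitz
  have hANunit : IsUnit AN := by
    rw [Matrix.isUnit_iff_isUnit_det, isUnit_iff_ne_zero]
    intro h0
    have hmap : ¬ IsUnit (AN.map (Complex.ofReal)) := by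
      rw [Matrix.isUnit_iff_isUnit_det]
      have : (AN.map (Complex.ofReal)).det = 0 := by
        have := (Complex.ofRealHom.map_det AN).symm
        simpa [h0, Matrix.map, Complex.ofRealHom] using this
      simp [this]
    have h0spec : (0 : ℂ) ∈ spectrum ℂ (AN.map (Complex.ofReal)) :=
      (spectrum.zero_mem_iff ℂ).mpr hmap
    have := hHurwitz 0 h0spec
    simp at this
  -- key factorization
  have hinvmul : ((1 : Matrix (Fin N × Fin 4) (Fin N × Fin 4) ℝ) - S22) *
      ((1 : Matrix (Fin N × Fin 4) (Fin N × Fin 4) ℝ) - S22)⁻¹ = 1 :=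
    Matrix.mul_nonsing_inv _ (Matrix.isUnit_iff_isUnit_det _ |>.mp hwp)
  have aux : ∀ {A : Type} [Ring A] [Algebra ℝ A] (c : ℝ) (S T K Sinv : A),
      T * K = 1 → (1 - S) * Sinv = 1 →
      1 - S * (1 + c • K) = (1 - S) * (T - c • (Sinv * S)) * K := by
    intro A _ _ c S T K Sinv hTK hS
    have h1 : (1 - S) * (Sinv * S) = S := by rw [← mul_assoc, hS, one_mul]
    have h2 : (1 - S) * (T - c • (Sinv * S)) * K
        = ((1 - S) * T - c • S) * K := by rw [mul_sub, mul_smul_comm, h1]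
    rw [h2, sub_mul, smul_mul_assoc, mul_assoc, hTK, mul_one, mul_add, mul_one,
      mul_smul_comm, sub_sub]
  have hkey : (1 : Matrix (Fin N × Fin 4) (Fin N × Fin 4) ℝ)
      - S22 * ((1 : Matrix (Fin N) (Fin N) ℝ) ⊗ₖ
          ((1 : Matrix (Fin 4) (Fin 4) ℝ) + γ • (A1 γ κ ε)⁻¹))
      = ((1 : Matrix (Fin N × Fin 4) (Fin N × Fin 4) ℝ) - S22) * AN *
        (((1 : Matrix (Fin N) (Fin N) ℝ) ⊗ₖ A1 γ κ ε)⁻¹) := by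
    rw [hAN, Matrix.inv_kronecker, inv_one]
    have hmulinv : A1 γ κ ε * (A1 γ κ ε)⁻¹ = 1 := Matrix.mul_nonsing_inv _ hdet.isUnit
    have hkron1 : ((1 : Matrix (Fin N) (Fin N) ℝ) ⊗ₖ A1 γ κ ε) *
        ((1 : Matrix (Fin N) (Fin N) ℝ) ⊗ₖ (A1 γ κ ε)⁻¹) = 1 := by
      rw [← Matrix.mul_kronecker_mul, mul_one, hmulinv, Matrix.one_kronecker_one]
    have hkadd : ((1 : Matrix (Fin N) (Fin N) ℝ) ⊗ₖ
          ((1 : Matrix (Fin 4) (Fin 4) ℝ) + γ • (A1 γ κ ε)⁻¹))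
        = 1 + γ • ((1 : Matrix (Fin N) (Fin N) ℝ) ⊗ₖ (A1 γ κ ε)⁻¹) := by
      rw [Matrix.kronecker_add, Matrix.kronecker_smul, Matrix.one_kronecker_one]
    rw [hkadd]
    exact aux γ S22 _ _ _ hkron1 hinvmul
  rw [hkey]
  exact (hwp.mul hANunit).mul hTinv
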